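/- arXiv:1902.03418 — 4 statements merged into one kernel-verified Lean document; each statement's English description precedes it below -/
import Mathlib

section
/- For every (l,m) with m ∈ ℕ, l ∈ {m, m-2, ..., -m}, the radial polynomial satisfies sup_{0 ≤ r ≤ 1} |R_m^{|l|}(r)| = 1, and in particular R_m^{|l|}(1) = 1. -/
open Set Finset

/-- The radial (Zernike) polynomial `R_m^{|l|}` for `|l| ≤ m` with `m - |l|` even. -/
noncomputable def radialPoly (m l : ℕ) (r : ℝ) : ℝ :=
  ∑ j ∈ Finset.range ((m - l) / 2 + 1),
    (-1 : ℝ) ^ j * (Nat.factorial (m - j) : ℝ) /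
      ((Nat.factorial j : ℝ) * (Nat.factorial ((m + l) / 2 - j) : ℝ) *
        (Nat.factorial ((m - l) / 2 - j) : ℝ)) * r ^ (m - 2 * j)

/-!
Write `m = q + k`, `l = q - k` and `r = cos θ`, `s = sin θ`. Then `R_m^l(r)` is the coefficient of
`x^q y^k` in the image `(r x - s y)^q (s x + r y)^k` of `x^q y^k` under the rotation by `θ`
(a Wigner `d`-matrix entry). Rotations preserve the Fischer inner product of binary forms of
degree `m`, in which the monomials are orthogonal with `‖x^q y^k‖² = q! k!`. So the rotated form
has norm `‖x^q y^k‖`, and its `x^q y^k`-coefficient is at most `1` in absolute value.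
At `r = 1` the rotation is the identity and the coefficient is `1`.
-/

open Polynomial Nat

namespace Polynomial

theorem coeff_C_mul_X_add_C_pow {R : Type*} [CommSemiring R] (a b : R) (n p : ℕ) :
    ((C a * X + C b) ^ n).coeff p = n.choose p * a ^ p * b ^ (n - p) := by
  have : (C a * X + C b) ^ n = ((X + C b) ^ n).comp (C a * X) := by simp
  rw [this, comp_C_mul_X_coeff, coeff_X_add_C_pow]
  ring

theorem eq_of_forall_sum_mul_pow_eq {R : Type*} [CommRing R] [IsDomain R] [Infinite R]
    {n i : ℕ} {a b : ℕ → R}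
    (h : ∀ t, ∑ k ∈ range n, a k * t ^ k = ∑ k ∈ range n, b k * t ^ k) (hi : i < n) :
    a i = b i := by
  have hpoly : ∑ k ∈ range n, C (a k) * X ^ k = ∑ k ∈ range n, C (b k) * X ^ k :=
    Polynomial.funext fun t => by simpa [eval_finsetSum] using h t
  simpa [finsetSum_coeff, coeff_C_mul_X_pow, hi] using congr_arg (coeff · i) hpoly

theorem eq_of_forall_sum_sum_mul_pow_eq {R : Type*} [CommRing R] [IsDomain R] [Infinite R]
    {n i j : ℕ} {a b : ℕ → ℕ → R}
    (h : ∀ t t', ∑ k ∈ range n, ∑ k' ∈ range n, a k k' * t ^ k * t' ^ k' =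
      ∑ k ∈ range n, ∑ k' ∈ range n, b k k' * t ^ k * t' ^ k')
    (hi : i < n) (hj : j < n) :
    a i j = b i j := by
  refine eq_of_forall_sum_mul_pow_eq (fun t' => ?_) hj
  refine eq_of_forall_sum_mul_pow_eq (a := fun k => ∑ k' ∈ range n, a k k' * t' ^ k')
    (b := fun k => ∑ k' ∈ range n, b k k' * t' ^ k') (fun t => ?_) hi
  simpa only [Finset.sum_mul, mul_right_comm _ (t' ^ _)] using h t t'

end Polynomial

/-- The Fischer inner product `⟨x^α, x^β⟩ = α! δ_{αβ}` of binary forms of degree `m`, read on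
dehomogenisations `f(X) = F(X, 1)`. -/
noncomputable def fischerPair (m : ℕ) : LinearMap.BilinForm ℝ ℝ[X] :=
  LinearMap.mk₂ ℝ (fun f g => ∑ p ∈ range (m + 1), f.coeff p * g.coeff p * (p ! * (m - p)! : ℝ))
    (fun f f' g => by simp only [coeff_add, add_mul, sum_add_distrib])
    (fun c f g => by simp only [coeff_smul, smul_eq_mul, mul_sum, mul_assoc])
    (fun f g g' => by simp only [coeff_add, mul_add, add_mul, sum_add_distrib])
    (fun c f g => by simp only [coeff_smul, smul_eq_mul, mul_sum, mul_left_comm _ c, mul_assoc])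

theorem fischerPair_apply (m : ℕ) (f g : ℝ[X]) :
    fischerPair m f g = ∑ p ∈ range (m + 1), f.coeff p * g.coeff p * (p ! * (m - p)! : ℝ) :=
  rfl

theorem fischerPair_C_mul_X_add_C_pow (m : ℕ) (a b c d : ℝ) :
    fischerPair m ((C a * X + C b) ^ m) ((C c * X + C d) ^ m) = m ! * (a * c + b * d) ^ m := by
  rw [fischerPair_apply, add_pow (a * c), mul_sum]
  refine sum_congr rfl fun p hp => ?_
  have hfact : (m.choose p * p ! * (m - p)! : ℝ) = m ! := by
    exact_mod_cast choose_mul_factorial_mul_factorial (mem_range_succ_iff.mp hp)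
  rw [coeff_C_mul_X_add_C_pow, coeff_C_mul_X_add_C_pow, ← hfact]
  ring

theorem sq_coeff_mul_le_fischerPair {m q : ℕ} (hq : q ≤ m) (f : ℝ[X]) :
    f.coeff q ^ 2 * (q ! * (m - q)! : ℝ) ≤ fischerPair m f f := by
  rw [fischerPair_apply, sq]
  exact single_le_sum (f := fun p => f.coeff p * f.coeff p * (p ! * (m - p)! : ℝ))
    (fun p _ => mul_nonneg (mul_self_nonneg _) (by positivity)) (mem_range_succ_iff.mpr hq)

theorem fischerPair_X_pow_self {m q : ℕ} (hq : q ≤ m) :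
    fischerPair m (X ^ q) (X ^ q) = q ! * (m - q)! := by
  simp [fischerPair_apply, coeff_X_pow, hq]

/-- The dehomogenised image of `x^k y^(m-k)` under `(x, y) ↦ (r x - s y, s x + r y)`. -/
noncomputable def wignerPoly (m : ℕ) (r s : ℝ) (k : ℕ) : ℝ[X] :=
  (C r * X - C s) ^ k * (C s * X + C r) ^ (m - k)

theorem sum_choose_smul_wignerPoly (m : ℕ) (r s t : ℝ) :
    ∑ k ∈ range (m + 1), (m.choose k * t ^ k : ℝ) • wignerPoly m r s k =
      (C (t * r + s) * X + C (r - t * s)) ^ m := by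
  have hlin : C (t * r + s) * X + C (r - t * s) = C t * (C r * X - C s) + (C s * X + C r) := by
    simp only [C_add, C_sub, C_mul]; ring
  rw [hlin, add_pow]
  refine sum_congr rfl fun k _ => ?_
  rw [wignerPoly, smul_eq_C_mul, C_mul, C_pow, ← C_eq_natCast, mul_pow]
  ring

theorem fischerPair_sum_choose_smul_wignerPoly {r s : ℝ} (hrs : r ^ 2 + s ^ 2 = 1) (m : ℕ)
    (t t' : ℝ) :
    fischerPair m (∑ k ∈ range (m + 1), (m.choose k * t ^ k : ℝ) • wignerPoly m r s k)
      (∑ k ∈ range (m + 1), (m.choose k * t' ^ k : ℝ) • wignerPoly m r s k) =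
      m ! * (t * t' + 1) ^ m := by
  rw [sum_choose_smul_wignerPoly, sum_choose_smul_wignerPoly, fischerPair_C_mul_X_add_C_pow]
  congr 2
  linear_combination (t * t' + 1) * hrs

/- The generating functions `∑ C(m,k) t^k • wignerPoly m r s k` pair to `m! (t t' + 1)^m` whatever
the rotation, and `(r, s) = (1, 0)` gives the monomials. -/
theorem fischerPair_wignerPoly {r s : ℝ} (hrs : r ^ 2 + s ^ 2 = 1) {m k k' : ℕ} (hk : k ≤ m)
    (hk' : k' ≤ m) :
    fischerPair m (wignerPoly m r s k) (wignerPoly m r s k') = fischerPair m (X ^ k) (X ^ k') := by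
  have expand : ∀ r s t t' : ℝ,
      fischerPair m (∑ k ∈ range (m + 1), (m.choose k * t ^ k : ℝ) • wignerPoly m r s k)
        (∑ k ∈ range (m + 1), (m.choose k * t' ^ k : ℝ) • wignerPoly m r s k) =
      ∑ k ∈ range (m + 1), ∑ k' ∈ range (m + 1), (m.choose k * m.choose k' *
        fischerPair m (wignerPoly m r s k) (wignerPoly m r s k') : ℝ) * t ^ k * t' ^ k' := by
    intro r s t t'
    simp only [map_sum, map_smul, LinearMap.sum_apply, LinearMap.smul_apply, smul_eq_mul, mul_sum]
    rw [sum_comm]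
    refine sum_congr rfl fun k _ => sum_congr rfl fun k' _ => ?_
    ring
  have hX : ∀ k, wignerPoly m 1 0 k = X ^ k := by simp [wignerPoly]
  have hcoeff := eq_of_forall_sum_sum_mul_pow_eq
    (a := fun k k' =>
      m.choose k * m.choose k' * fischerPair m (wignerPoly m r s k) (wignerPoly m r s k'))
    (b := fun k k' =>
      m.choose k * m.choose k' * fischerPair m (wignerPoly m 1 0 k) (wignerPoly m 1 0 k'))
    (fun t t' => by
      rw [← expand, ← expand, fischerPair_sum_choose_smul_wignerPoly hrs,
        fischerPair_sum_choose_smul_wignerPoly (by norm_num : (1 : ℝ) ^ 2 + 0 ^ 2 = 1)])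
    (lt_succ_of_le hk) (lt_succ_of_le hk')
  simp only [hX] at hcoeff
  have hchoose : (m.choose k * m.choose k' : ℝ) ≠ 0 := by
    have := choose_pos hk; have := choose_pos hk'; positivity
  exact mul_left_cancel₀ hchoose hcoeff

theorem abs_coeff_wignerPoly_self_le_one {r s : ℝ} (hrs : r ^ 2 + s ^ 2 = 1) {m q : ℕ}
    (hq : q ≤ m) : |(wignerPoly m r s q).coeff q| ≤ 1 := by
  have h := sq_coeff_mul_le_fischerPair hq (wignerPoly m r s q)
  rw [fischerPair_wignerPoly hrs hq hq, fischerPair_X_pow_self hq] at h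
  rw [← sq_le_one_iff_abs_le_one]
  exact (mul_le_iff_le_one_left (by positivity)).mp h

theorem coeff_wignerPoly_self {q k : ℕ} (hkq : k ≤ q) (r s : ℝ) :
    (wignerPoly (q + k) r s q).coeff q =
      ∑ j ∈ range (k + 1),
        (-1) ^ j * q.choose j * k.choose j * (s ^ 2) ^ j * r ^ (q + k - 2 * j) := by
  rw [wignerPoly, add_tsub_cancel_left, coeff_mul, ← Nat.sum_antidiagonal_swap]
  simp only [Prod.fst_swap, Prod.snd_swap]
  refine (Nat.sum_antidiagonal_eq_sum_range_succ (fun j i => ((C r * X - C s) ^ q).coeff i *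
    ((C s * X + C r) ^ k).coeff j) q).trans ?_
  rw [sub_eq_add_neg, ← C_neg]
  simp only [coeff_C_mul_X_add_C_pow]
  rw [← sum_subset (range_subset_range.2 (by omega : k + 1 ≤ q + 1))]
  · refine sum_congr rfl fun j hj => ?_
    have hjk : j ≤ k := mem_range_succ_iff.mp hj
    rw [choose_symm (by omega), tsub_tsub_cancel_of_le (by omega),
      show q + k - 2 * j = (q - j) + (k - j) by omega, pow_add]
    ring
  · intro j _ hj
    rw [choose_eq_zero_of_lt (n := k) (by simpa using hj)]
    simp

theorem Nat.sum_choose_mul_choose_mul_choose {q k n : ℕ} (hnq : n ≤ q) (hnk : n ≤ k) :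
    ∑ j ∈ range (k + 1), q.choose j * k.choose j * j.choose n =
      q.choose n * (q + k - n).choose (k - n) := by
  rw [show k + 1 = n + (k - n).succ by omega, sum_range_add,
    sum_eq_zero fun j hj => by rw [choose_eq_zero_of_lt (mem_range.mp hj), mul_zero], zero_add,
    show q + k - n = q - n + k by omega, add_choose_eq, Nat.sum_antidiagonal_eq_sum_range_succ_mk,
    mul_sum]
  refine sum_congr rfl fun t ht => ?_
  have hnt : n + t ≤ k := by have := mem_range_succ_iff.mp ht; omega
  rw [mul_right_comm, choose_mul (le_add_right n t), add_tsub_cancel_left, ← choose_symm hnt,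
    show k - (n + t) = k - n - t by omega]
  ring

theorem radialPoly_add_sub_eq_sum {q k : ℕ} (hkq : k ≤ q) (r : ℝ) :
    radialPoly (q + k) (q - k) r =
      ∑ j ∈ range (k + 1), (-1) ^ j * q.choose j * k.choose j * (1 - r ^ 2) ^ j *
        r ^ (q + k - 2 * j) := by
  have hexpand : ∀ j ∈ range (k + 1),
      (-1) ^ j * q.choose j * k.choose j * (1 - r ^ 2) ^ j * r ^ (q + k - 2 * j) =
        ∑ n ∈ range (k + 1),
          (-1) ^ n * ((q.choose j * k.choose j * j.choose n : ℕ) : ℝ) * r ^ (q + k - 2 * n) := by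
    intro j hj
    have hjk : j ≤ k := mem_range_succ_iff.mp hj
    rw [sub_eq_add_neg, add_pow, mul_sum, sum_mul,
      ← sum_subset (range_subset_range.2 (by omega : j + 1 ≤ k + 1))]
    · refine sum_congr rfl fun n hn => ?_
      have hnj : n ≤ j := mem_range_succ_iff.mp hn
      have hsign : (-1 : ℝ) ^ j = (-1) ^ n * (-1) ^ (j - n) := by
        rw [← pow_add, add_tsub_cancel_of_le hnj]
      have hsq : (-1 : ℝ) ^ (j - n) * (-1) ^ (j - n) = 1 := by rw [← mul_pow]; norm_num
      rw [neg_pow (r ^ 2), ← pow_mul, hsign,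
        show q + k - 2 * n = 2 * (j - n) + (q + k - 2 * j) by omega, pow_add]
      push_cast
      linear_combination ((-1) ^ n * (q.choose j * k.choose j * j.choose n : ℝ) *
        r ^ (2 * (j - n)) * r ^ (q + k - 2 * j)) * hsq
    · intro n _ hn
      rw [choose_eq_zero_of_lt (n := j) (by simpa using hn)]
      simp
  rw [radialPoly, show (q + k - (q - k)) / 2 = k by omega,
    show (q + k + (q - k)) / 2 = q by omega, sum_congr rfl hexpand, sum_comm]
  refine sum_congr rfl fun n hn => ?_
  have hnk : n ≤ k := mem_range_succ_iff.mp hn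
  rw [← sum_mul, ← mul_sum, ← Nat.cast_sum, Nat.sum_choose_mul_choose_mul_choose (by omega) hnk,
    Nat.cast_mul, cast_choose ℝ (by omega : n ≤ q), cast_choose ℝ (by omega : k - n ≤ q + k - n),
    show q + k - n - (k - n) = q by omega]
  field_simp

theorem radialPoly_add_sub_eq_coeff_wignerPoly {q k : ℕ} (hkq : k ≤ q) {r s : ℝ}
    (hrs : r ^ 2 + s ^ 2 = 1) :
    radialPoly (q + k) (q - k) r = (wignerPoly (q + k) r s q).coeff q := by
  rw [radialPoly_add_sub_eq_sum hkq, coeff_wignerPoly_self hkq, show s ^ 2 = 1 - r ^ 2 by linarith]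

theorem abs_radialPoly_add_sub_le_one {q k : ℕ} (hkq : k ≤ q) {r : ℝ} (hr : |r| ≤ 1) :
    |radialPoly (q + k) (q - k) r| ≤ 1 := by
  have hrs : r ^ 2 + √(1 - r ^ 2) ^ 2 = 1 := by
    rw [Real.sq_sqrt (by nlinarith [abs_le.mp hr]), add_sub_cancel]
  rw [radialPoly_add_sub_eq_coeff_wignerPoly hkq hrs]
  exact abs_coeff_wignerPoly_self_le_one hrs (le_add_right le_rfl)

theorem radialPoly_add_sub_one {q k : ℕ} (hkq : k ≤ q) : radialPoly (q + k) (q - k) 1 = 1 := by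
  simp [radialPoly_add_sub_eq_sum hkq, sum_range_succ']

/-- For admissible `(l,m)` the radial polynomial satisfies
`sup_{0 ≤ r ≤ 1} |R_m^{|l|}(r)| = 1`, and in particular `R_m^{|l|}(1) = 1`. -/
theorem radialPoly_sup_eq_one (m l : ℕ) (hlm : l ≤ m) (heven : Even (m - l)) :
    sSup ((fun r => |radialPoly m l r|) '' Set.Icc (0 : ℝ) 1) = 1 ∧
      radialPoly m l 1 = 1 := by
  obtain ⟨q, k, hkq, rfl, rfl⟩ : ∃ q k, k ≤ q ∧ m = q + k ∧ l = q - k := by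
    obtain ⟨c, hc⟩ := heven
    exact ⟨l + c, c, by omega, by omega, by omega⟩
  have hone := radialPoly_add_sub_one hkq
  refine ⟨IsGreatest.csSup_eq ⟨⟨1, right_mem_Icc.2 zero_le_one, by simp [hone]⟩, ?_⟩, hone⟩
  rintro _ ⟨r, hr, rfl⟩
  exact abs_radialPoly_add_sub_le_one hkq (abs_le.2 ⟨by linarith [hr.1], hr.2⟩)
end

section
/- The radial polynomials are orthogonal on [0,1] with weight r: for indices (l,m) and (l,m') with m,m' ≥ |l| and m-|l|, m'-|l| even, ∫₀¹ √(2(m+1)) R_m^{|l|}(r) · √(2(m'+1)) R_{m'}^{|l|}(r) · r dr = δ_{m,m'}. -/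
/-!
Write `m = l + 2p`. Then `R_m^l(r) = r^l Z_p(r²)` for a polynomial `Z_p` of degree `p`, and the
substitution `t = r²` turns the integral into `½ ∫₀¹ t^l Z_p(t) Z_q(t) dt` (times the normalising
constants). Rodrigues' formula `p! t^l Z_p(t) = (d/dt)^p [t^(l+p) (t-1)^p]` allows `p`
integrations by parts without boundary terms, since the bracket vanishes to order `p` at both
endpoints. This moves `(d/dt)^p` onto `Z_q`: for `q < p` the integral vanishes, and for `q = p` a
constant times a Beta integral remains, which evaluates to `1 / (l + 2p + 1)`.
-/

open MeasureTheory intervalIntegral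

open Polynomial Finset Nat

noncomputable def zernikePoly (l p : ℕ) : ℝ[X] :=
  ∑ j ∈ range (p + 1),
    C ((-1 : ℝ) ^ j * (l + 2 * p - j)! / (j ! * (l + p - j)! * (p - j)!)) * X ^ (p - j)

theorem radialPoly_add_two_mul (l p : ℕ) (r : ℝ) :
    radialPoly (l + 2 * p) l r = r ^ l * (zernikePoly l p).eval (r ^ 2) := by
  rw [radialPoly, zernikePoly, eval_finsetSum, mul_sum, show (l + 2 * p - l) / 2 = p by omega,
    show (l + 2 * p + l) / 2 = l + p by omega]
  refine sum_congr rfl fun j hj => ?_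
  have hj : j ≤ p := by simpa [Nat.lt_succ_iff] using hj
  rw [eval_mul, eval_C, eval_X_pow, ← pow_mul, show l + 2 * p - 2 * j = l + 2 * (p - j) by omega,
    pow_add]
  ring

theorem natDegree_zernikePoly_le (l p : ℕ) : (zernikePoly l p).natDegree ≤ p :=
  natDegree_sum_le_of_forall_le _ _ fun j _ =>
    (natDegree_C_mul_X_pow_le _ _).trans (Nat.sub_le p j)

theorem iterate_derivative_zernikePoly (l p : ℕ) :
    derivative^[p] (zernikePoly l p) = C ((l + 2 * p)! / (l + p)! : ℝ) := by
  rw [zernikePoly, iterate_derivative_sum, sum_eq_single_of_mem 0 (by simp)]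
  · simp only [iterate_derivative_C_mul, iterate_derivative_X_pow_eq_C_mul, Nat.sub_zero,
      Nat.sub_self, descFactorial_self, pow_zero, mul_one, ← C_mul]
    congr 1
    field_simp
    simp
  · intro j hj hj0
    have hjp := mem_range.mp hj
    rw [iterate_derivative_C_mul, iterate_derivative_X_pow_eq_C_mul,
      descFactorial_eq_zero_iff_lt.mpr (by omega)]
    simp

noncomputable def rodriguesPoly (l p : ℕ) : ℝ[X] := X ^ (l + p) * (X - 1) ^ p

theorem choose_mul_descFactorial_mul_factorial {n p j : ℕ} (hj : j ≤ p) (hp : p ≤ n) :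
    p.choose j * n.descFactorial p * (j ! * (n - p)! * (p - j)!) = p ! * n ! := by
  rw [← choose_mul_factorial_mul_factorial hj, ← factorial_mul_descFactorial hp]
  ring

theorem rodriguesPoly_eq_sum (l p : ℕ) :
    rodriguesPoly l p =
      ∑ j ∈ range (p + 1), C ((-1) ^ j * p.choose j : ℝ) * X ^ (l + 2 * p - j) := by
  rw [rodriguesPoly, sub_eq_neg_add, add_pow, mul_sum]
  refine sum_congr rfl fun j hj => ?_
  have hj : j ≤ p := by simpa [Nat.lt_succ_iff] using hj
  rw [show l + 2 * p - j = (l + p) + (p - j) by omega, pow_add]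
  simp only [C_mul, C_pow, C_neg, C_1, C_eq_natCast]
  ring

theorem iterate_derivative_rodriguesPoly (l p : ℕ) :
    derivative^[p] (rodriguesPoly l p) = C (p ! : ℝ) * (X ^ l * zernikePoly l p) := by
  rw [rodriguesPoly_eq_sum, iterate_derivative_sum, zernikePoly, mul_sum, mul_sum]
  refine sum_congr rfl fun j hj => ?_
  have hj : j ≤ p := by simpa [Nat.lt_succ_iff] using hj
  rw [iterate_derivative_C_mul, iterate_derivative_X_pow_eq_C_mul,
    show l + 2 * p - j - p = l + (p - j) by omega, pow_add]
  have hcoeff := choose_mul_descFactorial_mul_factorial (n := l + 2 * p - j) hj (by omega)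
  rw [show l + 2 * p - j - p = l + p - j by omega] at hcoeff
  have hden : (j ! * (l + p - j)! * (p - j)! : ℝ) ≠ 0 := by positivity
  have hcoeffℝ : (-1 : ℝ) ^ j * p.choose j * (l + 2 * p - j).descFactorial p =
      p ! * ((-1) ^ j * (l + 2 * p - j)! / (j ! * (l + p - j)! * (p - j)!)) := by
    field_simp
    norm_cast
    rw [← hcoeff]
    ring
  calc _ = C ((-1 : ℝ) ^ j * p.choose j * (l + 2 * p - j).descFactorial p) *
        (X ^ l * X ^ (p - j)) := by simp only [C_mul]; ring
    _ = _ := by rw [hcoeffℝ, C_mul]; ring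

theorem eval_iterate_derivative_eq_zero_of_pow_dvd {R : Type*} [CommRing R] {P : R[X]} {a : R}
    {n i : ℕ} (h : (X - C a) ^ n ∣ P) (hi : i < n) : (derivative^[i] P).eval a = 0 := by
  obtain ⟨Q, hQ⟩ := pow_sub_dvd_iterate_derivative_of_pow_dvd i h
  rw [hQ, eval_mul, eval_pow, eval_sub, eval_X, eval_C, sub_self, zero_pow (by omega), zero_mul]

theorem eval_zero_iterate_derivative_rodriguesPoly {l p i : ℕ} (hi : i < p) :
    (derivative^[i] (rodriguesPoly l p)).eval 0 = 0 :=
  eval_iterate_derivative_eq_zero_of_pow_dvd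
    (by rw [C_0, sub_zero]; exact (pow_dvd_pow X (by omega)).mul_right _) hi

theorem eval_one_iterate_derivative_rodriguesPoly {l p i : ℕ} (hi : i < p) :
    (derivative^[i] (rodriguesPoly l p)).eval 1 = 0 :=
  eval_iterate_derivative_eq_zero_of_pow_dvd (by rw [C_1]; exact dvd_mul_left _ _) hi

theorem integral_eval_mul_eval_iterate_derivative {a b : ℝ} (Q H : ℝ[X]) (n : ℕ)
    (ha : ∀ i < n, (derivative^[i] H).eval a = 0)
    (hb : ∀ i < n, (derivative^[i] H).eval b = 0) :
    ∫ x in a..b, Q.eval x * (derivative^[n] H).eval x =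
      (-1) ^ n * ∫ x in a..b, (derivative^[n] Q).eval x * H.eval x := by
  induction n generalizing Q with
  | zero => simp
  | succ n ih =>
    have hparts := integral_mul_deriv_eq_deriv_mul (a := a) (b := b)
      (fun x _ => Q.hasDerivAt x) (fun x _ => (derivative^[n] H).hasDerivAt x)
      (Q.derivative.continuous.intervalIntegrable _ _)
      ((derivative (derivative^[n] H)).continuous.intervalIntegrable _ _)
    rw [ha n n.lt_succ_self, hb n n.lt_succ_self, mul_zero, mul_zero, sub_zero, zero_sub,
      ih _ (fun i hi => ha i (by omega)) (fun i hi => hb i (by omega))] at hparts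
    rw [Function.iterate_succ_apply', hparts, Function.iterate_succ_apply, pow_succ]
    ring

theorem integral_pow_mul_one_sub_pow (a b : ℕ) :
    ∫ x in (0 : ℝ)..1, x ^ a * (1 - x) ^ b = (a ! * b ! / (a + b + 1)! : ℝ) := by
  have hB := Complex.Gamma_mul_Gamma_eq_betaIntegral (s := a + 1) (t := b + 1)
    (by simp; positivity) (by simp; positivity)
  rw [show (a + 1 + (b + 1) : ℂ) = ((a + b + 1 : ℕ) : ℂ) + 1 by push_cast; ring] at hB
  simp only [Complex.Gamma_nat_eq_factorial, Complex.betaIntegral, add_sub_cancel_right,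
    Complex.cpow_natCast] at hB
  norm_cast at hB
  rw [intervalIntegral.integral_ofReal] at hB
  rw [eq_div_iff (by positivity)]
  exact_mod_cast (hB.trans (mul_comm _ _)).symm

theorem integral_rodriguesPoly (l p : ℕ) :
    ∫ x in (0 : ℝ)..1, (rodriguesPoly l p).eval x =
      (-1) ^ p * ((l + p)! * p ! / (l + 2 * p + 1)!) := by
  have hflip (x : ℝ) : (rodriguesPoly l p).eval x = (-1) ^ p * (x ^ (l + p) * (1 - x) ^ p) := by
    rw [rodriguesPoly, eval_mul, eval_pow, eval_pow, eval_sub, eval_X, eval_one, ← neg_sub 1 x,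
      neg_pow]
    ring
  simp_rw [hflip, intervalIntegral.integral_const_mul, integral_pow_mul_one_sub_pow]
  ring_nf

theorem integral_X_pow_mul_zernikePoly_mul_eval (Q : ℝ[X]) (l p : ℕ) :
    ∫ x in (0 : ℝ)..1, x ^ l * (zernikePoly l p).eval x * Q.eval x =
      (-1) ^ p / p ! *
        ∫ x in (0 : ℝ)..1, (derivative^[p] Q).eval x * (rodriguesPoly l p).eval x := by
  have hrodrigues (x : ℝ) : x ^ l * (zernikePoly l p).eval x =
      (derivative^[p] (rodriguesPoly l p)).eval x / p ! := by
    rw [iterate_derivative_rodriguesPoly, eval_mul, eval_C, eval_mul, eval_X_pow]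
    field_simp
  simp_rw [hrodrigues, div_mul_eq_mul_div, mul_comm _ (Q.eval _), intervalIntegral.integral_div,
    integral_eval_mul_eval_iterate_derivative Q _ p
      (fun _ => eval_zero_iterate_derivative_rodriguesPoly)
      (fun _ => eval_one_iterate_derivative_rodriguesPoly)]

theorem integral_X_pow_mul_zernikePoly_mul_zernikePoly_of_lt {l p q : ℕ} (hqp : q < p) :
    ∫ x in (0 : ℝ)..1, x ^ l * (zernikePoly l p).eval x * (zernikePoly l q).eval x = 0 := by
  simp_rw [integral_X_pow_mul_zernikePoly_mul_eval,
    iterate_derivative_eq_zero ((natDegree_zernikePoly_le l q).trans_lt hqp)]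
  simp

theorem integral_X_pow_mul_zernikePoly_sq (l p : ℕ) :
    ∫ x in (0 : ℝ)..1, x ^ l * (zernikePoly l p).eval x * (zernikePoly l p).eval x =
      1 / (l + 2 * p + 1) := by
  simp_rw [integral_X_pow_mul_zernikePoly_mul_eval, iterate_derivative_zernikePoly, eval_C,
    intervalIntegral.integral_const_mul, integral_rodriguesPoly, factorial_succ]
  have hsign : ((-1 : ℝ) ^ p) * (-1) ^ p = 1 := by rw [← mul_pow]; norm_num
  push_cast
  field_simp
  linear_combination hsign

theorem integral_X_pow_mul_zernikePoly_mul_zernikePoly (l p q : ℕ) :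
    ∫ x in (0 : ℝ)..1, x ^ l * (zernikePoly l p).eval x * (zernikePoly l q).eval x =
      if p = q then (1 / (l + 2 * p + 1) : ℝ) else 0 := by
  rcases lt_trichotomy p q with hpq | rfl | hqp
  · rw [if_neg hpq.ne]
    refine (integral_congr fun x _ => ?_).trans
      (integral_X_pow_mul_zernikePoly_mul_zernikePoly_of_lt (l := l) hpq)
    ring
  · rw [integral_X_pow_mul_zernikePoly_sq, if_pos rfl]
  · rw [integral_X_pow_mul_zernikePoly_mul_zernikePoly_of_lt hqp, if_neg hqp.ne']

theorem integral_comp_sq_mul_two_mul {a b : ℝ} {f : ℝ → ℝ} (hf : Continuous f) :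
    ∫ r in a..b, f (r ^ 2) * (2 * r) = ∫ t in a ^ 2..b ^ 2, f t :=
  integral_comp_mul_deriv (fun r _ => by simpa using hasDerivAt_pow 2 r) (by fun_prop) hf

/-- Orthogonality of the radial polynomials on `[0,1]` with weight `r`. -/
theorem radialPoly_orthogonal (l m m' : ℕ)
    (hm : l ≤ m) (hm' : l ≤ m') (he : Even (m - l)) (he' : Even (m' - l)) :
    ∫ r in (0 : ℝ)..1,
        Real.sqrt (2 * (m + 1)) * radialPoly m l r *
          (Real.sqrt (2 * (m' + 1)) * radialPoly m' l r) * r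
      = if m = m' then 1 else 0 := by
  obtain ⟨p, rfl⟩ : ∃ p, m = l + 2 * p := by obtain ⟨k, hk⟩ := he; exact ⟨k, by omega⟩
  obtain ⟨q, rfl⟩ : ∃ q, m' = l + 2 * q := by obtain ⟨k, hk⟩ := he'; exact ⟨k, by omega⟩
  set K := Real.sqrt (2 * ((l + 2 * p : ℕ) + 1))
  set K' := Real.sqrt (2 * ((l + 2 * q : ℕ) + 1))
  set Zpq := fun t : ℝ => t ^ l * (zernikePoly l p).eval t * (zernikePoly l q).eval t
  have hsubst (r : ℝ) : K * radialPoly (l + 2 * p) l r * (K' * radialPoly (l + 2 * q) l r) * r =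
      K * K' / 2 * (Zpq (r ^ 2) * (2 * r)) := by
    simp only [Zpq, radialPoly_add_two_mul]
    ring
  simp_rw [hsubst, intervalIntegral.integral_const_mul]
  rw [integral_comp_sq_mul_two_mul (by fun_prop), zero_pow two_ne_zero, one_pow,
    integral_X_pow_mul_zernikePoly_mul_zernikePoly]
  by_cases hpq : p = q
  · subst hpq
    have hKK : K * K' = 2 * ((l + 2 * p : ℕ) + 1) := Real.mul_self_sqrt (by positivity)
    rw [if_pos rfl, if_pos rfl, hKK]
    push_cast
    field_simp
  · rw [if_neg hpq, if_neg (by omega), mul_zero]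
end

section
/- For every k ∈ ℕ₀ and m ∈ ℕ₀, the k-th derivative of the m-th Chebyshev polynomial of the second kind satisfies sup_{0 ≤ s ≤ 1} |dᵏ/dsᵏ U_m(s)| ≤ (m+1) m^{2k} for k ≥ 1, and sup_{-1 ≤ s ≤ 1} |U_m(s)| ≤ m+1 for k = 0. -/
open Polynomial

private lemma sin_nat_mul_le (n : ℕ) (θ : ℝ) : |Real.sin (n * θ)| ≤ n * |Real.sin θ| := by
  induction n with
  | zero => simp
  | succ n ih =>
    have h : Real.sin ((n + 1 : ℕ) * θ) = Real.sin (n * θ) * Real.cos θ + Real.cos (n * θ) * Real.sin θ := by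
      push_cast; rw [add_mul, one_mul, Real.sin_add]
    rw [h]
    have c1 : |Real.sin (n * θ) * Real.cos θ| ≤ (n : ℝ) * |Real.sin θ| := by
      rw [abs_mul]
      exact le_trans (mul_le_of_le_one_right (abs_nonneg _) (Real.abs_cos_le_one θ)) ih
    have c2 : |Real.cos (n * θ) * Real.sin θ| ≤ |Real.sin θ| := by
      rw [abs_mul]
      exact mul_le_of_le_one_left (abs_nonneg _) (Real.abs_cos_le_one _)
    calc |Real.sin (n * θ) * Real.cos θ + Real.cos (n * θ) * Real.sin θ|
        ≤ |Real.sin (n * θ) * Real.cos θ| + |Real.cos (n * θ) * Real.sin θ| := abs_add_le _ _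
      _ ≤ (n : ℝ) * |Real.sin θ| + |Real.sin θ| := add_le_add c1 c2
      _ = ((n + 1 : ℕ) : ℝ) * |Real.sin θ| := by push_cast; ring

private lemma absU (m : ℕ) : ∀ s ∈ Set.Icc (-1 : ℝ) 1,
    |(Polynomial.Chebyshev.U ℝ m).eval s| ≤ (m : ℝ) + 1 := by
  have hsub : Set.Icc (-1 : ℝ) 1 ⊆ {s : ℝ | |(Polynomial.Chebyshev.U ℝ m).eval s| ≤ (m : ℝ) + 1} := by
    rw [← closure_Ioo (by norm_num : (-1 : ℝ) ≠ 1)]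
    apply closure_minimal
    · intro s hs
      obtain ⟨h1, h2⟩ := hs
      set θ := Real.arccos s with hθ
      have hcos : Real.cos θ = s := Real.cos_arccos h1.le h2.le
      have hsinpos : 0 < Real.sin θ :=
        Real.sin_pos_of_pos_of_lt_pi (Real.arccos_pos.2 h2)
          (lt_of_le_of_ne (Real.arccos_le_pi s) fun h => by
            rw [Real.arccos_eq_pi] at h; linarith)
      have hU := Polynomial.Chebyshev.U_real_cos θ m
      rw [hcos] at hU
      have hsin : Real.sin (((m : ℤ) + 1) * θ) = Real.sin ((m + 1 : ℕ) * θ) := by push_cast; ring_nf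
      have key : |(Polynomial.Chebyshev.U ℝ m).eval s| * Real.sin θ ≤ ((m : ℝ) + 1) * Real.sin θ := by
        calc |(Polynomial.Chebyshev.U ℝ m).eval s| * Real.sin θ
            = |(Polynomial.Chebyshev.U ℝ m).eval s * Real.sin θ| := by
              rw [abs_mul, abs_of_pos hsinpos]
          _ = |Real.sin ((m + 1 : ℕ) * θ)| := by rw [hU, hsin]
          _ ≤ (m + 1 : ℕ) * |Real.sin θ| := sin_nat_mul_le _ _
          _ = ((m : ℝ) + 1) * Real.sin θ := by rw [abs_of_pos hsinpos]; push_cast; ring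
      exact le_of_mul_le_mul_right key hsinpos
    · exact isClosed_le ((Polynomial.continuous _).abs) continuous_const
  exact fun s hs => hsub hs

private lemma derivU (m : ℕ) : derivative (Polynomial.Chebyshev.U ℝ (m + 2 : ℕ)) =
    derivative (Polynomial.Chebyshev.U ℝ m) +
      C (2 * ((m : ℝ) + 2)) * Polynomial.Chebyshev.U ℝ (m + 1 : ℕ) := by
  have h2 := Polynomial.Chebyshev.T_eq_U_sub_X_mul_U ℝ ((m : ℤ) + 2)
  rw [show (m : ℤ) + 2 - 1 = (m : ℤ) + 1 from by ring] at h2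
  have hU : Polynomial.Chebyshev.U ℝ ((m : ℤ) + 2) = Polynomial.Chebyshev.U ℝ m +
      2 * Polynomial.Chebyshev.T ℝ ((m : ℤ) + 2) := by
    linear_combination -(Polynomial.Chebyshev.U_add_two ℝ (m : ℤ)) - 2 * h2
  have h3 := Polynomial.Chebyshev.T_derivative_eq_U (R := ℝ) ((m : ℤ) + 2)
  rw [show (m : ℤ) + 2 - 1 = (m : ℤ) + 1 from by ring] at h3
  have := congrArg derivative hU
  rw [derivative_add, derivative_mul, h3] at this
  have hC : (C (2 * ((m : ℝ) + 2)) : ℝ[X]) = 2 * (((m : ℕ) : ℝ[X]) + 2) := by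
    rw [map_mul, map_add, map_natCast, map_ofNat]
  rw [hC]
  have hd2 : derivative (2 : ℝ[X]) = 0 := by simp
  rw [hd2, zero_mul, zero_add] at this
  push_cast at this ⊢
  linear_combination this

private lemma keyBound (m : ℕ) : ∀ k : ℕ, ∀ s ∈ Set.Icc (-1 : ℝ) 1,
    |(derivative^[k] (Polynomial.Chebyshev.U ℝ m)).eval s| ≤ ((m : ℝ) + 1) * (m : ℝ) ^ (2 * k) := by
  induction m using Nat.twoStepInduction with
  | zero =>
    intro k s hs
    cases k with
    | zero => simp [Polynomial.Chebyshev.U_zero]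
    | succ j =>
      rw [Function.iterate_succ_apply]
      simp [Polynomial.Chebyshev.U_zero, Nat.mul_succ, pow_succ]
  | one =>
    intro k s hs
    have h1 : Polynomial.Chebyshev.U ℝ (1 : ℕ) = 2 * X := Polynomial.Chebyshev.U_one ℝ
    cases k with
    | zero =>
      simpa using absU 1 s hs
    | succ j =>
      rw [Function.iterate_succ_apply, h1]
      have hd : derivative ((2 : ℝ[X]) * X) = 2 := by
        simp [derivative_mul]
      rw [hd]
      cases j with
      | zero => norm_num
      | succ i =>
        rw [Function.iterate_succ_apply, show derivative (2 : ℝ[X]) = 0 from by simp,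
          show (⇑derivative)^[i] (0 : ℝ[X]) = 0 from Function.iterate_fixed (by simp) i]
        simp
  | more n ih ih1 =>
    intro k s hs
    cases k with
    | zero =>
      simpa using absU (n + 2) s hs
    | succ j =>
      rw [Function.iterate_succ_apply, derivU n]
      rw [show derivative^[j] (derivative (Polynomial.Chebyshev.U ℝ (n : ℕ)) +
            C (2 * ((n : ℝ) + 2)) * Polynomial.Chebyshev.U ℝ ((n + 1 : ℕ))) =
          derivative^[j] (derivative (Polynomial.Chebyshev.U ℝ (n : ℕ))) +
            C (2 * ((n : ℝ) + 2)) * derivative^[j] (Polynomial.Chebyshev.U ℝ ((n + 1 : ℕ))) from by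
        rw [iterate_map_add, Polynomial.iterate_derivative_C_mul]]
      have hA := ih (j + 1) s hs
      rw [Function.iterate_succ_apply] at hA
      have hB := ih1 j s hs
      rw [eval_add, eval_mul, eval_C]
      set x : ℝ := (n : ℝ) with hx
      have hx0 : (0 : ℝ) ≤ x := Nat.cast_nonneg n
      have hBc : |(derivative^[j] (Polynomial.Chebyshev.U ℝ ((n + 1 : ℕ)))).eval s| ≤
          (x + 2) * (x + 1) ^ (2 * j) := by
        calc _ ≤ _ := hB
          _ = (x + 2) * (x + 1) ^ (2 * j) := by push_cast; ring
      have habs : |(derivative^[j] (derivative (Polynomial.Chebyshev.U ℝ (n : ℕ)))).eval s +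
            2 * (x + 2) * (derivative^[j] (Polynomial.Chebyshev.U ℝ ((n + 1 : ℕ)))).eval s| ≤
          (x + 1) * x ^ (2 * (j + 1)) + 2 * (x + 2) * ((x + 2) * (x + 1) ^ (2 * j)) := by
        calc _ ≤ |(derivative^[j] (derivative (Polynomial.Chebyshev.U ℝ (n : ℕ)))).eval s| +
              |2 * (x + 2)| * |(derivative^[j] (Polynomial.Chebyshev.U ℝ ((n + 1 : ℕ)))).eval s| := by
                rw [← abs_mul]; exact abs_add_le _ _
          _ ≤ (x + 1) * x ^ (2 * (j + 1)) + 2 * (x + 2) * ((x + 2) * (x + 1) ^ (2 * j)) := by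
              rw [abs_of_nonneg (by linarith : (0:ℝ) ≤ 2 * (x + 2))]
              gcongr
      have e1 : x ^ (2 * (j + 1)) ≤ (x + 2) ^ (2 * (j + 1)) :=
        pow_le_pow_left₀ hx0 (by linarith) _
      have e2 : (x + 1) ^ (2 * j) ≤ (x + 2) ^ (2 * j) :=
        pow_le_pow_left₀ (by linarith) (by linarith) _
      have e3 : (x + 2) ^ (2 * (j + 1)) = (x + 2) ^ 2 * (x + 2) ^ (2 * j) := by
        rw [← pow_add]; ring_nf
      have hgoal : (x + 1) * x ^ (2 * (j + 1)) + 2 * (x + 2) * ((x + 2) * (x + 1) ^ (2 * j)) ≤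
          (x + 3) * (x + 2) ^ (2 * (j + 1)) := by
        have t1 : (x + 1) * x ^ (2 * (j + 1)) ≤ (x + 1) * (x + 2) ^ (2 * (j + 1)) := by
          gcongr
        have t2 : 2 * (x + 2) * ((x + 2) * (x + 1) ^ (2 * j)) ≤ 2 * (x + 2) ^ (2 * (j + 1)) := by
          rw [e3]; nlinarith [pow_nonneg (by linarith : (0:ℝ) ≤ x + 1) (2 * j)]
        linarith
      push_cast
      calc _ ≤ _ := habs
        _ ≤ (x + 3) * (x + 2) ^ (2 * (j + 1)) := hgoal
        _ = (x + 2 + 1) * (x + 2) ^ (2 * (j + 1)) := by ring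

private lemma iterDerivEval (p : ℝ[X]) (k : ℕ) :
    iteratedDeriv k (fun s : ℝ => p.eval s) = fun s : ℝ => (derivative^[k] p).eval s := by
  induction k generalizing p with
  | zero => simp
  | succ j ih =>
    rw [iteratedDeriv_succ', Function.iterate_succ_apply]
    rw [show (deriv fun s : ℝ => p.eval s) = fun s : ℝ => (derivative p).eval s from
      funext fun x => Polynomial.deriv p]
    exact ih _

/-- Uniform bounds for the derivatives of the Chebyshev polynomials of the second kind:
`|U_m| ≤ m + 1` on `[-1,1]`, and `|dᵏ/dsᵏ U_m(s)| ≤ (m+1) m^{2k}` on `[0,1]` for `k ≥ 1`. -/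
theorem chebyshevU_iteratedDeriv_bound (m : ℕ) :
    (∀ s ∈ Set.Icc (-1 : ℝ) 1,
        |(Polynomial.Chebyshev.U ℝ m).eval s| ≤ (m : ℝ) + 1) ∧
      ∀ k : ℕ, 1 ≤ k → ∀ s ∈ Set.Icc (0 : ℝ) 1,
        |iteratedDeriv k (fun s : ℝ => (Polynomial.Chebyshev.U ℝ m).eval s) s| ≤
          ((m : ℝ) + 1) * (m : ℝ) ^ (2 * k) := by
  refine ⟨absU m, fun k _ s hs => ?_⟩
  rw [iterDerivEval]
  exact keyBound m k s ⟨by linarith [hs.1], hs.2⟩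
end

section
/- Grid counting bound for the entropy estimate: let τ̃ > t̃ + δ > t̃ > 5/2 and C ≥ 1. For each m ≤ M := ⌈(C/ε)^{1/(τ̃−t̃)}⌉ and each of the m+1 admissible values of l, let G_{(l,m)} be a grid of at most ⌈4C(m+1)^{τ̃−t̃}/ε⌉² points in the square [−(m+1)^{−τ̃}, (m+1)^{−τ̃}]² ⊂ ℂ such that every point of the square is within ε/(C(m+1)^{t̃}) of a grid point in each coordinate. Then the total number of coefficient vectors, Π_{m=0}^{M} Π_{l} |G_{(l,m)}|, is at most exp( log(C/ε) · (C/ε)^{2/(τ̃−t̃)} · C'' ) for a constant C'' independent of ε; in particular, for sufficiently small ε it is at most exp( (C/ε)^{2/(τ̃ − t̃ − δ)} ). -/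
/-! Put `x = C/ε` and `s = τ - t`. Since `M + 1 ≤ 3 x^{1/s}`, every grid has at most
`((4·3^s + 1) x²)²` points, and there are at most `2(M+1)² ≤ 18 x^{2/s}` indices `(l, m)`, so the
logarithm of the product is `O(x^{2/s} log x)`. As `log x = o(x^{2/(s-δ) - 2/s})`, this is
eventually below `x^{2/(s-δ)}`. -/

open Real Finset

/-- The admissible angular indices for degree `m`: `l ∈ {m, m-2, …, -m}`. -/
noncomputable def admissible (m : ℕ) : Finset ℤ :=
  (Finset.Icc (-(m : ℤ)) m).filter fun l => Even (m - l.natAbs)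

lemma card_admissible_le (m : ℕ) : #(admissible m) ≤ 2 * m + 1 :=
  (card_filter_le _ _).trans_eq (by rw [Int.card_Icc]; omega)

lemma sum_card_admissible_le (M : ℕ) :
    ∑ m ∈ range (M + 1), #(admissible m) ≤ 2 * (M + 1) ^ 2 :=
  calc ∑ m ∈ range (M + 1), #(admissible m)
      ≤ ∑ _m ∈ range (M + 1), (2 * M + 2) :=
        sum_le_sum fun m hm => by
          have := mem_range.1 hm
          have := card_admissible_le m
          omega
    _ = 2 * (M + 1) ^ 2 := by rw [sum_const, card_range, smul_eq_mul]; ring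

lemma Finset.prod_prod_le_pow_sum_card {ι κ M : Type*} [CommMonoid M] [PartialOrder M]
    [MulLeftMono M] {s : Finset ι} {t : ι → Finset κ} {f : ι → κ → M} {n : M}
    (h : ∀ i ∈ s, ∀ j ∈ t i, f i j ≤ n) :
    ∏ i ∈ s, ∏ j ∈ t i, f i j ≤ n ^ ∑ i ∈ s, #(t i) := by
  rw [prod_sigma', ← card_sigma]
  exact prod_le_pow_card _ _ _ fun p hp => h p.1 (mem_sigma.1 hp).1 p.2 (mem_sigma.1 hp).2

lemma natCeil_add_one_le_three_mul {u : ℝ} (hu : 1 ≤ u) : (⌈u⌉₊ : ℝ) + 1 ≤ 3 * u := by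
  linarith [Nat.ceil_lt_add_one (zero_le_one.trans hu)]

lemma natCeil_grid_side_le {s x : ℝ} (hs : 0 < s) (hx : 1 ≤ x) :
    (⌈4 * x * ((⌈x ^ (1 / s)⌉₊ : ℝ) + 1) ^ s⌉₊ : ℝ) ≤ (4 * 3 ^ s + 1) * x ^ 2 := by
  have hu : 1 ≤ x ^ (1 / s) := one_le_rpow hx (by positivity)
  have hM : ((⌈x ^ (1 / s)⌉₊ : ℝ) + 1) ^ s ≤ 3 ^ s * x :=
    calc ((⌈x ^ (1 / s)⌉₊ : ℝ) + 1) ^ s ≤ (3 * x ^ (1 / s)) ^ s :=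
          rpow_le_rpow (by positivity) (natCeil_add_one_le_three_mul hu) hs.le
      _ = 3 ^ s * x := by
          rw [mul_rpow (by norm_num) (by positivity), ← rpow_mul (by positivity),
            one_div_mul_cancel hs.ne', rpow_one]
  calc (⌈4 * x * ((⌈x ^ (1 / s)⌉₊ : ℝ) + 1) ^ s⌉₊ : ℝ)
      ≤ 4 * x * ((⌈x ^ (1 / s)⌉₊ : ℝ) + 1) ^ s + 1 := (Nat.ceil_lt_add_one (by positivity)).le
    _ ≤ 4 * x * (3 ^ s * x) + x ^ 2 := by gcongr; nlinarith
    _ = (4 * 3 ^ s + 1) * x ^ 2 := by ring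

lemma prod_card_grid_le_exp {s x : ℝ} (hs : 0 < s) (hx : exp 1 ≤ x) (G : ℕ → ℤ → Finset ℂ)
    (hcard : ∀ m l, #(G m l) ≤ ⌈4 * x * ((m : ℝ) + 1) ^ s⌉₊ ^ 2) :
    ∏ m ∈ range (⌈x ^ (1 / s)⌉₊ + 1), ∏ l ∈ admissible m, (#(G m l) : ℝ) ≤
      exp (log x * x ^ (2 / s) * (36 * (log (4 * 3 ^ s + 1) + 2))) := by
  set M := ⌈x ^ (1 / s)⌉₊
  set n := ∑ m ∈ range (M + 1), #(admissible m)
  set K : ℝ := 4 * 3 ^ s + 1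
  have hx1 : 1 ≤ x := (one_le_exp zero_le_one).trans hx
  have hlogx : 1 ≤ log x := by simpa using log_le_log (exp_pos 1) hx
  have hK : 1 ≤ K := by have : (1 : ℝ) ≤ 3 ^ s := one_le_rpow (by norm_num) hs.le; linarith
  have hprod : ∏ m ∈ range (M + 1), ∏ l ∈ admissible m, #(G m l) ≤
      (⌈4 * x * ((M : ℝ) + 1) ^ s⌉₊ ^ 2) ^ n := by
    refine prod_prod_le_pow_sum_card fun m hm l _ => (hcard m l).trans ?_
    have : (m : ℝ) ≤ M := by exact_mod_cast Nat.lt_succ_iff.1 (mem_range.1 hm)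
    gcongr
  have hn : (n : ℝ) ≤ 18 * x ^ (2 / s) := by
    have h1 : (n : ℝ) ≤ 2 * ((M : ℝ) + 1) ^ 2 := by exact_mod_cast sum_card_admissible_le M
    have h2 : ((M : ℝ) + 1) ^ 2 ≤ (3 * x ^ (1 / s)) ^ 2 := by
      gcongr; exact natCeil_add_one_le_three_mul (one_le_rpow hx1 (by positivity))
    have h3 : (x ^ (1 / s)) ^ 2 = x ^ (2 / s) := by
      rw [← rpow_natCast, ← rpow_mul (by positivity)]; ring_nf
    nlinarith
  have hlog : log ((K * x ^ 2) ^ 2) ≤ 2 * (log K + 2) * log x := by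
    rw [log_pow, log_mul (by positivity) (by positivity), log_pow]
    push_cast
    nlinarith [log_nonneg hK]
  calc ∏ m ∈ range (M + 1), ∏ l ∈ admissible m, (#(G m l) : ℝ)
      ≤ ((K * x ^ 2) ^ 2) ^ n := by
        have := natCeil_grid_side_le hs hx1
        exact_mod_cast (Nat.cast_le.2 hprod).trans (by push_cast; gcongr)
    _ = exp (n * log ((K * x ^ 2) ^ 2)) := by
        rw [← log_pow, exp_log (by positivity)]
    _ ≤ exp (log x * x ^ (2 / s) * (36 * (log K + 2))) := by
        have hlog0 : 0 ≤ log ((K * x ^ 2) ^ 2) :=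
          log_nonneg (one_le_pow₀ (one_le_mul_of_one_le_of_one_le hK (one_le_pow₀ hx1)))
        refine exp_le_exp.2 ((mul_le_mul hn hlog hlog0 (by positivity)).trans_eq ?_)
        ring

lemma eventually_log_mul_rpow_mul_le_rpow {a b : ℝ} (hab : a < b) (c : ℝ) :
    ∀ᶠ x in Filter.atTop, log x * x ^ a * c ≤ x ^ b := by
  filter_upwards [(isLittleO_log_rpow_atTop (sub_pos.2 hab)).bound (c := (|c| + 1)⁻¹)
    (by positivity), Filter.eventually_ge_atTop 1] with x hlog hx
  have hx0 : 0 < x := zero_lt_one.trans_le hx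
  have hlog0 : 0 ≤ log x := log_nonneg hx
  rw [norm_of_nonneg hlog0, norm_of_nonneg (by positivity), inv_mul_eq_div,
    le_div_iff₀ (by positivity)] at hlog
  calc log x * x ^ a * c ≤ log x * (|c| + 1) * x ^ a := by
        rw [mul_right_comm]; gcongr; linarith [le_abs_self c]
    _ ≤ x ^ (b - a) * x ^ a := by gcongr
    _ = x ^ b := by rw [← rpow_add hx0, sub_add_cancel]

theorem grid_counting_bound_general (τ t δ C : ℝ) (hδ : 0 < δ)
    (hτ : t + δ < τ) (hC : 1 ≤ C) :
    ∃ C'' : ℝ, 0 < C'' ∧ ∃ ε₁ : ℝ, 0 < ε₁ ∧ ε₁ ≤ 1 ∧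
      ∀ ε : ℝ, 0 < ε → ε ≤ ε₁ →
        ∀ G : ℕ → ℤ → Finset ℂ,
          (∀ (m : ℕ) (l : ℤ),
            (G m l).card ≤ ⌈4 * C * ((m : ℝ) + 1) ^ (τ - t) / ε⌉₊ ^ 2) →
          (∀ (m : ℕ), ∀ l ∈ admissible m, ∀ z : ℂ,
            |z.re| ≤ ((m : ℝ) + 1) ^ (-τ) → |z.im| ≤ ((m : ℝ) + 1) ^ (-τ) →
            ∃ w ∈ G m l, |z.re - w.re| ≤ ε / (C * ((m : ℝ) + 1) ^ t) ∧
              |z.im - w.im| ≤ ε / (C * ((m : ℝ) + 1) ^ t)) →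
          ((∏ m ∈ Finset.range (⌈(C / ε) ^ (1 / (τ - t))⌉₊ + 1),
              ∏ l ∈ admissible m, ((G m l).card : ℝ)) ≤
            Real.exp (Real.log (C / ε) * (C / ε) ^ (2 / (τ - t)) * C'')) ∧
          ((∏ m ∈ Finset.range (⌈(C / ε) ^ (1 / (τ - t))⌉₊ + 1),
              ∏ l ∈ admissible m, ((G m l).card : ℝ)) ≤
            Real.exp ((C / ε) ^ (2 / (τ - t - δ)))) := by
  have hs : 0 < τ - t := by linarith
  set c : ℝ := 36 * (log (4 * 3 ^ (τ - t) + 1) + 2)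
  have hc : 0 < c := by
    have : 0 ≤ log (4 * 3 ^ (τ - t) + 1) :=
      log_nonneg (by linarith [rpow_nonneg zero_le_three (τ - t)])
    positivity
  have hexp : 2 / (τ - t) < 2 / (τ - t - δ) :=
    div_lt_div_of_pos_left two_pos (by linarith) (by linarith)
  obtain ⟨X, hX⟩ := Filter.eventually_atTop.1 ((Filter.eventually_ge_atTop (max (exp 1) C)).and
    (eventually_log_mul_rpow_mul_le_rpow hexp c))
  have hCX : C ≤ X := le_of_max_le_right (hX X le_rfl).1
  have hC0 : 0 < C := zero_lt_one.trans_le hC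
  have hX0 : 0 < X := hC0.trans_le hCX
  refine ⟨c, hc, C / X, by positivity, div_le_one_of_le₀ hCX hX0.le,
    fun ε hε hεX G hcard _ => ?_⟩
  obtain ⟨hxe, hxP⟩ := hX (C / ε) ((le_div_comm₀ hε hX0).1 hεX)
  have hbound := prod_card_grid_le_exp hs (le_of_max_le_left hxe) G fun m l => by
    convert hcard m l using 4; ring
  exact ⟨hbound, hbound.trans (exp_le_exp.2 hxP)⟩

/-- Grid counting bound for the entropy estimate: the total number of coefficient vectors
built from grids `G_{(l,m)}` with at most `⌈4C(m+1)^{τ−t}/ε⌉²` points each, over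
`m ≤ M = ⌈(C/ε)^{1/(τ−t)}⌉` and the `m+1` admissible `l`, is at most
`exp(log(C/ε)(C/ε)^{2/(τ−t)} C'')` for a constant `C''` independent of `ε`; in
particular, for sufficiently small `ε` it is at most `exp((C/ε)^{2/(τ−t−δ)})`. -/
theorem grid_counting_bound (τ t δ C : ℝ) (ht : 5 / 2 < t) (hδ : 0 < δ)
    (hτ : t + δ < τ) (hC : 1 ≤ C) :
    ∃ C'' : ℝ, 0 < C'' ∧ ∃ ε₁ : ℝ, 0 < ε₁ ∧ ε₁ ≤ 1 ∧
      ∀ ε : ℝ, 0 < ε → ε ≤ ε₁ →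
        ∀ G : ℕ → ℤ → Finset ℂ,
          (∀ (m : ℕ) (l : ℤ),
            (G m l).card ≤ ⌈4 * C * ((m : ℝ) + 1) ^ (τ - t) / ε⌉₊ ^ 2) →
          (∀ (m : ℕ), ∀ l ∈ admissible m, ∀ z : ℂ,
            |z.re| ≤ ((m : ℝ) + 1) ^ (-τ) → |z.im| ≤ ((m : ℝ) + 1) ^ (-τ) →
            ∃ w ∈ G m l, |z.re - w.re| ≤ ε / (C * ((m : ℝ) + 1) ^ t) ∧
              |z.im - w.im| ≤ ε / (C * ((m : ℝ) + 1) ^ t)) →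
          ((∏ m ∈ Finset.range (⌈(C / ε) ^ (1 / (τ - t))⌉₊ + 1),
              ∏ l ∈ admissible m, ((G m l).card : ℝ)) ≤
            Real.exp (Real.log (C / ε) * (C / ε) ^ (2 / (τ - t)) * C'')) ∧
          ((∏ m ∈ Finset.range (⌈(C / ε) ^ (1 / (τ - t))⌉₊ + 1),
              ∏ l ∈ admissible m, ((G m l).card : ℝ)) ≤
            Real.exp ((C / ε) ^ (2 / (τ - t - δ)))) :=
  grid_counting_bound_general τ t δ C hδ hτ hC
end
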